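/- arXiv:math/0702515 — 6 statements merged into one kernel-verified Lean document; each statement's English description precedes it below -/
import Mathlib

section
/- Every pairwise compatible split system on a finite set X = {1,…,n} is circular: there exists a bijection x : {1,…,n} → X (a circular ordering of X) such that every split in the system has one block of the form {x_{i+1}, x_{i+2}, …, x_j} for some i < j. -/
/-- A split `S = {A,B}` of `X = {1,…,n}` (modeled as `Fin n`): a partition of
`X` into two nonempty blocks. -/
structure Split (n : ℕ) where
  A : Finset (Fin n)
  B : Finset (Fin n)
  hA : A.Nonempty
  hB : B.Nonempty
  hdisj : Disjoint A B
  hcover : A ∪ B = Finset.univ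

/-- A split system is pairwise compatible if for every pair of distinct splits
`{A,B}` and `{A',B'}`, at least one of `A∩A'`, `A∩B'`, `B∩A'`, `B∩B'` is
empty. -/
def PairwiseCompatible {n : ℕ} (𝒮 : Set (Split n)) : Prop :=
  ∀ S₁ ∈ 𝒮, ∀ S₂ ∈ 𝒮, S₁ ≠ S₂ →
    S₁.A ∩ S₂.A = ∅ ∨ S₁.A ∩ S₂.B = ∅ ∨ S₁.B ∩ S₂.A = ∅ ∨ S₁.B ∩ S₂.B = ∅


/-!
Fix a point `p`. For each split take its block avoiding `p`; compatibility of two splits says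
that one of the four intersections of their blocks is empty, and since the two blocks containing
`p` meet, the blocks avoiding `p` are nested or disjoint. A laminar family can be listed so that
every member is a contiguous stretch of the list, and putting `p` in front of such a listing of
`X \ {p}` gives the circular ordering.
-/

open Finset

def IsLaminar {α : Type*} (F : Set (Finset α)) : Prop :=
  ∀ C ∈ F, ∀ D ∈ F, C ⊆ D ∨ D ⊆ C ∨ Disjoint C D

theorem IsLaminar.mono {α : Type*} {F G : Set (Finset α)} (hG : IsLaminar G) (hFG : F ⊆ G) :
    IsLaminar F :=
  fun C hC D hD => hG C (hFG hC) D (hFG hD)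

/-- For a maximal member `M`, the members not inside `M` are disjoint from it, so a listing of `M`
followed by one of `U \ M` works, by induction on `F`. -/
theorem IsLaminar.exists_list_infix {α : Type*} [DecidableEq α] (F : Finset (Finset α))
    (hF : IsLaminar (F : Set (Finset α))) (U : Finset α) (hU : ∀ C ∈ F, C ⊆ U) :
    ∃ l : List α, l.Nodup ∧ l.toFinset = U ∧ ∀ C ∈ F, ∃ m, m <:+: l ∧ m.toFinset = C := by
  induction F using Finset.strongInduction generalizing U with
  | H F ih =>
  rcases F.eq_empty_or_nonempty with rfl | hFne
  · exact ⟨U.toList, U.nodup_toList, U.toList_toFinset, by simp⟩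
  obtain ⟨M, hMF, hMmax⟩ := F.exists_maximal hFne
  have hdisj : ∀ C ∈ F.filter (¬ · ⊆ M), Disjoint C M := by
    intro C hC
    rw [mem_filter] at hC
    rcases hF C hC.1 M hMF with h | h | h
    · exact absurd h hC.2
    · exact absurd (hMmax hC.1 h) hC.2
    · exact h
  have hsub : ∀ G ⊆ F, IsLaminar (G : Set (Finset α)) := fun G hG => hF.mono (by simpa)
  obtain ⟨li, hli, hliM, hliC⟩ := ih (F.filter (· ⊂ M))
    (filter_ssubset.2 ⟨M, hMF, irrefl M⟩) (hsub _ (filter_subset _ _)) M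
    (fun C hC => (mem_filter.1 hC).2.subset)
  obtain ⟨lo, hlo, hloU, hloC⟩ := ih (F.filter (¬ · ⊆ M))
    (filter_ssubset.2 ⟨M, hMF, by simp⟩) (hsub _ (filter_subset _ _)) (U \ M)
    (fun C hC => subset_sdiff.2 ⟨hU C (mem_filter.1 hC).1, hdisj C hC⟩)
  refine ⟨li ++ lo, ?_, ?_, ?_⟩
  · refine List.nodup_append.2 ⟨hli, hlo, fun a ha b hb hab => ?_⟩
    have haM : a ∈ M := hliM ▸ List.mem_toFinset.2 ha
    have hbM : b ∈ U \ M := hloU ▸ List.mem_toFinset.2 hb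
    exact (mem_sdiff.1 hbM).2 (hab ▸ haM)
  · rw [List.toFinset_append, hliM, hloU, union_sdiff_of_subset (hU M hMF)]
  · intro C hC
    by_cases hCM : C ⊆ M
    · obtain rfl | hCM := hCM.eq_or_ssubset
      · exact ⟨li, List.infix_append [] li lo, hliM⟩
      · obtain ⟨m, hm, rfl⟩ := hliC C (mem_filter.2 ⟨hC, hCM⟩)
        exact ⟨m, hm.trans (List.infix_append [] li lo), rfl⟩
    · obtain ⟨m, hm, rfl⟩ := hloC C (mem_filter.2 ⟨hC, hCM⟩)
      exact ⟨m, hm.trans (List.suffix_append li lo).isInfix, rfl⟩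

/-- Listing `p` first and then `l` gives a circular ordering in which every nonempty infix of `l`
occupies a block of positions `i + 1, …, j`. -/
theorem exists_perm_image_Ioc_eq_of_infix {n : ℕ} {p : Fin n} {l : List (Fin n)} (hl : l.Nodup)
    (hlU : l.toFinset = univ.erase p) :
    ∃ x : Equiv.Perm (Fin n), ∀ m, m <:+: l → m ≠ [] →
      ∃ i j : Fin n, i < j ∧ m.toFinset = (Ioc i j).image x := by
  have hp : p ∉ l := fun h => by simpa [hlU] using List.mem_toFinset.2 h
  have hmem : ∀ y, y ∈ p :: l := fun y => by
    by_cases hy : y = p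
    · simp [hy]
    · exact List.mem_cons_of_mem p (List.mem_toFinset.1 (hlU ▸ mem_erase.2 ⟨hy, mem_univ y⟩))
  have hnodup : (p :: l).Nodup := List.nodup_cons.2 ⟨hp, hl⟩
  have hlen : (p :: l).length = n := by
    simpa using (List.toFinset_card_of_nodup hnodup).symm.trans (by simp [List.toFinset_cons, hlU])
  refine ⟨(finCongr hlen.symm).trans (hnodup.getEquivOfForallMemList _ hmem), ?_⟩
  rintro m ⟨s, t, rfl⟩ hm
  have hpos : 0 < m.length := List.length_pos_iff.2 hm
  have hlen' : s.length + m.length < n := by simp at hlen; omega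
  refine ⟨⟨s.length, by omega⟩, ⟨s.length + m.length, hlen'⟩, Fin.mk_lt_mk.2 (by omega), ?_⟩
  have hget : ∀ r (hr : r < m.length),
      (p :: (s ++ m ++ t))[s.length + 1 + r]'(by simp; omega) = m[r] := fun r hr => by grind
  ext y
  simp only [List.mem_toFinset, mem_image, mem_Ioc, Equiv.trans_apply, finCongr_apply,
    List.Nodup.getEquivOfForallMemList_apply, Fin.lt_def, Fin.le_def]
  constructor
  · intro hy
    obtain ⟨r, hr, rfl⟩ := List.mem_iff_getElem.1 hy
    exact ⟨⟨s.length + 1 + r, by omega⟩, ⟨by simp; omega, by simp; omega⟩, hget r hr⟩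
  · rintro ⟨k, ⟨hk₁, hk₂⟩, rfl⟩
    obtain ⟨r, hr⟩ : ∃ r, k.val = s.length + 1 + r := ⟨k.val - s.length - 1, by omega⟩
    simp only [List.get_eq_getElem, Fin.val_cast, hr]
    rw [hget r (by omega)]
    exact List.getElem_mem _

theorem Finset.subset_or_subset_or_disjoint_of_inter_eq_empty {α : Type*} [Fintype α]
    [DecidableEq α] {C D : Finset α} {p : α} (hC : p ∉ C) (hD : p ∉ D)
    (h : C ∩ D = ∅ ∨ C ∩ Dᶜ = ∅ ∨ Cᶜ ∩ D = ∅ ∨ Cᶜ ∩ Dᶜ = ∅) :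
    C ⊆ D ∨ D ⊆ C ∨ Disjoint C D := by
  rcases h with h | h | h | h
  · exact Or.inr (Or.inr (disjoint_iff_inter_eq_empty.2 h))
  · exact Or.inl (disjoint_compl_right_iff.1 (disjoint_iff_inter_eq_empty.2 h))
  · exact Or.inr (Or.inl (disjoint_compl_left_iff.1 (disjoint_iff_inter_eq_empty.2 h)))
  · exact absurd (h ▸ mem_inter.2 ⟨mem_compl.2 hC, mem_compl.2 hD⟩) (notMem_empty p)

namespace Split

variable {n : ℕ}

theorem compl_A (S : Split n) : S.Aᶜ = S.B := by
  rw [compl_eq_univ_sdiff, ← S.hcover, union_sdiff_left, S.hdisj.symm.sdiff_eq_left]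

def blockAvoiding (S : Split n) (p : Fin n) : Finset (Fin n) :=
  if p ∈ S.A then S.B else S.A

theorem notMem_blockAvoiding (S : Split n) (p : Fin n) : p ∉ S.blockAvoiding p := by
  unfold blockAvoiding
  split_ifs with h
  · rw [← S.compl_A]; simpa using h
  · exact h

theorem blockAvoiding_eq (S : Split n) (p : Fin n) :
    S.A = S.blockAvoiding p ∧ S.B = (S.blockAvoiding p)ᶜ ∨
      S.A = (S.blockAvoiding p)ᶜ ∧ S.B = S.blockAvoiding p := by
  unfold blockAvoiding
  split_ifs
  · exact Or.inr ⟨by rw [← S.compl_A, compl_compl], rfl⟩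
  · exact Or.inl ⟨rfl, S.compl_A.symm⟩

theorem blockAvoiding_nonempty (S : Split n) (p : Fin n) : (S.blockAvoiding p).Nonempty := by
  rcases S.blockAvoiding_eq p with ⟨h, -⟩ | ⟨-, h⟩ <;> rw [← h]
  exacts [S.hA, S.hB]

end Split

theorem PairwiseCompatible.isLaminar_image_blockAvoiding {n : ℕ} {𝒮 : Set (Split n)}
    (h𝒮 : PairwiseCompatible 𝒮) (p : Fin n) : IsLaminar ((·.blockAvoiding p) '' 𝒮) := by
  rintro _ ⟨S, hS, rfl⟩ _ ⟨T, hT, rfl⟩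
  by_cases hST : S = T
  · exact Or.inl (hST ▸ subset_rfl)
  refine subset_or_subset_or_disjoint_of_inter_eq_empty (S.notMem_blockAvoiding p)
    (T.notMem_blockAvoiding p) ?_
  have hST := h𝒮 S hS T hT hST
  rcases S.blockAvoiding_eq p with ⟨hSA, hSB⟩ | ⟨hSA, hSB⟩ <;>
    rcases T.blockAvoiding_eq p with ⟨hTA, hTB⟩ | ⟨hTA, hTB⟩ <;>
    simp only [hSA, hSB, hTA, hTB] at hST <;> tauto

/-- every pairwise compatible split system on `X = {1,…,n}` is
circular: there is a bijection (circular ordering) `x : {1,…,n} → X` such that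
every split in the system has one block of the form `{x_{i+1},…,x_j}`
(the image under `x` of `Ioc i j`) for some `i < j`. -/
theorem pairwiseCompatible_isCircular {n : ℕ} (𝒮 : Set (Split n))
    (hcomp : PairwiseCompatible 𝒮) :
    ∃ x : Equiv.Perm (Fin n), ∀ S ∈ 𝒮, ∃ i j : Fin n, i < j ∧
      (S.A = (Finset.Ioc i j).image x ∨ S.B = (Finset.Ioc i j).image x) := by
  rcases Nat.eq_zero_or_pos n with rfl | hn
  · exact ⟨1, fun S _ => S.hA.choose.elim0⟩
  let p : Fin n := ⟨0, hn⟩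
  have hfin : ((·.blockAvoiding p) '' 𝒮).Finite := Set.toFinite _
  obtain ⟨l, hl, hlU, hlC⟩ := IsLaminar.exists_list_infix hfin.toFinset
    (by simpa using hcomp.isLaminar_image_blockAvoiding p) (univ.erase p)
    (fun C hC => by
      obtain ⟨S, -, rfl⟩ := hfin.mem_toFinset.1 hC
      exact subset_erase.2 ⟨subset_univ _, S.notMem_blockAvoiding p⟩)
  obtain ⟨x, hx⟩ := exists_perm_image_Ioc_eq_of_infix hl hlU
  refine ⟨x, fun S hS => ?_⟩
  obtain ⟨m, hm, hmS⟩ := hlC _ (hfin.mem_toFinset.2 ⟨S, hS, rfl⟩)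
  have hm_ne : m ≠ [] := by
    rintro rfl
    simpa [← hmS] using S.blockAvoiding_nonempty p
  obtain ⟨i, j, hij, hmx⟩ := hx m hm hm_ne
  have hblock : S.blockAvoiding p = (Ioc i j).image x := hmS.symm.trans hmx
  refine ⟨i, j, hij, ?_⟩
  rcases S.blockAvoiding_eq p with ⟨h, -⟩ | ⟨-, h⟩
  · exact Or.inl (h.trans hblock)
  · exact Or.inr (h.trans hblock)
end

section
/- Let δ = Σ_{S∈𝒮} λ_S δ_S be a dissimilarity map on X = {1,…,n}, where every split S ∈ 𝒮 is circular with respect to the identity circular ordering and λ_S ≥ 0. Then for all indices i < j < k < l, the strict inequality δ(i,j) + δ(k,l) < δ(i,k) + δ(j,l) holds if and only if there exists a split S = {A,B} ∈ 𝒮 with λ_S > 0 such that i,j ∈ A and k,l ∈ B. -/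
/-- The split pseudometric `δ_S`: `δ_S(x,y) = 0` if `x,y` lie in the same
block of `S` and `1` otherwise. -/
noncomputable def splitMetric {n : ℕ} (S : Split n) (x y : Fin n) : ℝ :=
  if x ∈ S.A ↔ y ∈ S.A then 0 else 1

/-- A split is circular with respect to the identity circular ordering if one
of its blocks is of the form `{i+1, i+2, …, j}` (i.e. `Ioc i j`) for some
`i < j`. -/
def IsCircularSplit {n : ℕ} (S : Split n) : Prop :=
  ∃ i j : Fin n, i < j ∧ (S.A = Finset.Ioc i j ∨ S.B = Finset.Ioc i j)

/-- The elements `i,j` lie in one block of the split `S = {A,B}` and `k,l` in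
the other. -/
def SeparatesPairs {n : ℕ} (S : Split n) (i j k l : Fin n) : Prop :=
  (i ∈ S.A ∧ j ∈ S.A ∧ k ∈ S.B ∧ l ∈ S.B) ∨
  (i ∈ S.B ∧ j ∈ S.B ∧ k ∈ S.A ∧ l ∈ S.A)

section Aux
variable {n : ℕ}

lemma memB_iff (S : Split n) (x : Fin n) : x ∈ S.B ↔ x ∉ S.A := by
  have hx : x ∈ S.A ∪ S.B := S.hcover ▸ Finset.mem_univ x
  rw [Finset.mem_union] at hx
  have hd := Finset.disjoint_left.mp S.hdisj
  constructor
  · intro hb ha; exact hd ha hb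
  · intro ha; tauto

lemma ioc_conv (a b : Fin n) (x y z : Fin n) (hxy : x ≤ y) (hyz : y ≤ z)
    (hx : x ∈ Finset.Ioc a b) (hz : z ∈ Finset.Ioc a b) : y ∈ Finset.Ioc a b := by
  rw [Finset.mem_Ioc] at *
  exact ⟨lt_of_lt_of_le hx.1 hxy, le_trans hyz hz.2⟩

lemma split_key (S : Split n) (hc : IsCircularSplit S) (i j k l : Fin n)
    (hij : i < j) (hjk : j < k) (hkl : k < l) :
    0 ≤ splitMetric S i k + splitMetric S j l - (splitMetric S i j + splitMetric S k l) ∧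
    (0 < splitMetric S i k + splitMetric S j l - (splitMetric S i j + splitMetric S k l) ↔
      SeparatesPairs S i j k l) := by
  have conv : (∀ x y z : Fin n, x ≤ y → y ≤ z → x ∈ S.A → z ∈ S.A → y ∈ S.A) ∨
      (∀ x y z : Fin n, x ≤ y → y ≤ z → x ∈ S.B → z ∈ S.B → y ∈ S.B) := by
    obtain ⟨a, b, _, h | h⟩ := hc
    · exact Or.inl fun x y z hxy hyz hx hz => h ▸ ioc_conv a b x y z hxy hyz (h ▸ hx) (h ▸ hz)
    · exact Or.inr fun x y z hxy hyz hx hz => h ▸ ioc_conv a b x y z hxy hyz (h ▸ hx) (h ▸ hz)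
  by_cases hi : i ∈ S.A <;> by_cases hj : j ∈ S.A <;> by_cases hk : k ∈ S.A <;>
    by_cases hl : l ∈ S.A <;>
    simp only [splitMetric, SeparatesPairs, memB_iff, hi, hj, hk, hl,
      iff_true, iff_false, true_iff, false_iff, if_true, if_false, not_true, not_false_iff,
      if_pos, if_neg, not_not] <;>
    norm_num
  · -- pattern 1010 : i∈A j∉A k∈A l∉A
    rcases conv with hA | hB
    · exact hj (hA i j k hij.le hjk.le hi hk)
    · exact (memB_iff S k).mp
        (hB j k l hjk.le hkl.le ((memB_iff S j).mpr hj) ((memB_iff S l).mpr hl)) hk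
  · -- pattern 0101
    rcases conv with hA | hB
    · exact hk (hA j k l hjk.le hkl.le hj hl)
    · exact (memB_iff S j).mp
        (hB i j k hij.le hjk.le ((memB_iff S i).mpr hi) ((memB_iff S k).mpr hk)) hj
end Aux


/-- let `δ = Σ_{S∈𝒮} λ_S δ_S` with every `S ∈ 𝒮` circular with
respect to the identity circular ordering and `λ_S ≥ 0`.  Then for all
`i < j < k < l`, the strict inequality `δ(i,j) + δ(k,l) < δ(i,k) + δ(j,l)`
holds iff some split `S = {A,B} ∈ 𝒮` with `λ_S > 0` has `i,j ∈ A` and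
`k,l ∈ B`. -/
theorem strict_kalmanson_iff_separating_split {n : ℕ}
    (𝒮 : Finset (Split n)) (w : Split n → ℝ)
    (hcirc : ∀ S ∈ 𝒮, IsCircularSplit S) (hw : ∀ S ∈ 𝒮, 0 ≤ w S)
    (δ : Fin n → Fin n → ℝ)
    (hδ : ∀ x y, δ x y = ∑ S ∈ 𝒮, w S * splitMetric S x y) :
    ∀ i j k l : Fin n, i < j → j < k → k < l →
      (δ i j + δ k l < δ i k + δ j l ↔
        ∃ S ∈ 𝒮, 0 < w S ∧ SeparatesPairs S i j k l) := by
  intro i j k l hij hjk hkl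
  set d : Split n → ℝ := fun S =>
    splitMetric S i k + splitMetric S j l - (splitMetric S i j + splitMetric S k l) with hd
  have key : ∀ S ∈ 𝒮, 0 ≤ d S ∧ (0 < d S ↔ SeparatesPairs S i j k l) :=
    fun S hS => split_key S (hcirc S hS) i j k l hij hjk hkl
  have hsum : δ i k + δ j l - (δ i j + δ k l) = ∑ S ∈ 𝒮, w S * d S := by
    simp only [hδ, hd, ← Finset.sum_sub_distrib, ← Finset.sum_add_distrib]
    apply Finset.sum_congr rfl
    intro S _
    ring
  have hterm : ∀ S ∈ 𝒮, 0 ≤ w S * d S :=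
    fun S hS => mul_nonneg (hw S hS) (key S hS).1
  constructor
  · intro hlt
    have hpos : 0 < ∑ S ∈ 𝒮, w S * d S := by rw [← hsum]; linarith
    by_contra hno
    push_neg at hno
    have hzero : ∀ S ∈ 𝒮, w S * d S = 0 := by
      intro S hS
      rcases lt_or_eq_of_le (hw S hS) with hwpos | hweq
      · rcases lt_or_eq_of_le (key S hS).1 with hdpos | hdeq
        · exact absurd ((key S hS).2.mp hdpos) (fun h => absurd hwpos (not_lt.mpr
            (le_of_not_gt (fun hp => (hno S hS hp) h))))
        · rw [← hdeq, mul_zero]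
      · rw [← hweq, zero_mul]
    rw [Finset.sum_eq_zero hzero] at hpos
    exact lt_irrefl 0 hpos
  · rintro ⟨S, hS, hwS, hsep⟩
    have hdS : 0 < d S := (key S hS).2.mpr hsep
    have : 0 < ∑ T ∈ 𝒮, w T * d T :=
      Finset.sum_pos' hterm ⟨S, hS, mul_pos hwS hdS⟩
    linarith [hsum ▸ this]
end

section
/- Let δ be a dissimilarity map on {1,…,n} satisfying the Kalmanson conditions with respect to the identity circular ordering. Let C_1 < C_2 < … < C_m be a partition of {1,…,n} into consecutive intervals, let μ : {1,…,n} → ℝ satisfy μ(i) ≥ 0 and Σ_{i∈C_r} μ(i) = 1 for every r, and define D(r,s) = Σ_{i∈C_r, j∈C_s} μ(i)μ(j)δ(i,j). Suppose r < s < t < u and there exist a ∈ C_r, b ∈ C_s, x ∈ C_t, y ∈ C_u with μ(a), μ(b), μ(x), μ(y) > 0 and δ(a,b) + δ(x,y) < δ(a,x) + δ(b,y). Then D(r,s) + D(t,u) < D(r,t) + D(s,u). -/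
/-!
Average the four-point Kalmanson inequality `δ(i,j) + δ(k,l) ≤ δ(i,k) + δ(j,l)`, valid for
`i ∈ C_r, j ∈ C_s, k ∈ C_t, l ∈ C_u` since the blocks are ordered, against the product weights
`μ(i)μ(j)μ(k)μ(l)`. As every block has unit mass, the two averages are `D(r,s) + D(t,u)` and
`D(r,t) + D(s,u)`, and the quadruple `(a,b,x,y)` has positive weight and a strict inequality.
-/

/-- A dissimilarity map on `{1,…,n}` (modeled as `Fin n`): symmetric,
nonnegative, and zero on the diagonal. -/
def IsDissimilarity {n : ℕ} (δ : Fin n → Fin n → ℝ) : Prop :=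
  (∀ i j, δ i j = δ j i) ∧ (∀ i j, 0 ≤ δ i j) ∧ (∀ i, δ i i = 0)

/-- The Kalmanson conditions with respect to the identity circular ordering. -/
def Kalmanson {n : ℕ} (δ : Fin n → Fin n → ℝ) : Prop :=
  ∀ i j k l : Fin n, i < j → j < k → k < l →
    δ i j + δ k l ≤ δ i k + δ j l ∧ δ i l + δ j k ≤ δ i k + δ j l

/-- The weighted block distance `D(r,s) = Σ_{i∈C_r, j∈C_s} μ(i)μ(j)δ(i,j)`. -/
noncomputable def blockDist {n m : ℕ} (δ : Fin n → Fin n → ℝ)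
    (C : Fin m → Finset (Fin n)) (μ : Fin n → ℝ) (r s : Fin m) : ℝ :=
  ∑ i ∈ C r, ∑ j ∈ C s, μ i * μ j * δ i j

open Finset

section WeightedSums

variable {ι : Type*} (μ : ι → ℝ) (A B C D : Finset ι)

noncomputable def weightedSum4 (F : ι → ι → ι → ι → ℝ) : ℝ :=
  ∑ i ∈ A, ∑ j ∈ B, ∑ k ∈ C, ∑ l ∈ D, μ i * μ j * μ k * μ l * F i j k l

variable {μ A B C D}

lemma sum_sum_mul_mul_of_sum_eq_one (hA : ∑ i ∈ A, μ i = 1) (hB : ∑ j ∈ B, μ j = 1) (c : ℝ) :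
    ∑ i ∈ A, ∑ j ∈ B, μ i * μ j * c = c := by
  simp_rw [mul_assoc, ← mul_sum, ← sum_mul, hB, hA, one_mul]

lemma weightedSum4_add_pairs (hA : ∑ i ∈ A, μ i = 1) (hB : ∑ j ∈ B, μ j = 1)
    (hC : ∑ k ∈ C, μ k = 1) (hD : ∑ l ∈ D, μ l = 1) (f g : ι → ι → ℝ) :
    weightedSum4 μ A B C D (fun i j k l => f i j + g k l) =
      ∑ i ∈ A, ∑ j ∈ B, μ i * μ j * f i j + ∑ k ∈ C, ∑ l ∈ D, μ k * μ l * g k l := by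
  simp only [weightedSum4, mul_add, sum_add_distrib]
  congr 1
  · refine sum_congr rfl fun i _ => sum_congr rfl fun j _ => ?_
    rw [← sum_sum_mul_mul_of_sum_eq_one hC hD (μ i * μ j * f i j)]
    exact sum_congr rfl fun k _ => sum_congr rfl fun l _ => by ring
  · rw [← sum_sum_mul_mul_of_sum_eq_one hA hB (∑ k ∈ C, ∑ l ∈ D, μ k * μ l * g k l)]
    simp only [mul_sum]
    refine sum_congr rfl fun i _ => sum_congr rfl fun j _ => ?_
    exact sum_congr rfl fun k _ => sum_congr rfl fun l _ => by ring

lemma weightedSum4_add_crossed_pairs (hA : ∑ i ∈ A, μ i = 1) (hB : ∑ j ∈ B, μ j = 1)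
    (hC : ∑ k ∈ C, μ k = 1) (hD : ∑ l ∈ D, μ l = 1) (f g : ι → ι → ℝ) :
    weightedSum4 μ A B C D (fun i j k l => f i k + g j l) =
      ∑ i ∈ A, ∑ k ∈ C, μ i * μ k * f i k + ∑ j ∈ B, ∑ l ∈ D, μ j * μ l * g j l := by
  have hswap : weightedSum4 μ A B C D (fun i j k l => f i k + g j l) =
      weightedSum4 μ A C B D (fun i k j l => f i k + g j l) := by
    refine sum_congr rfl fun i _ => ?_
    rw [sum_comm]
    exact sum_congr rfl fun k _ => sum_congr rfl fun j _ => sum_congr rfl fun l _ => by ring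
  rw [hswap, weightedSum4_add_pairs hA hC hB hD]

lemma weightedSum4_lt_weightedSum4 (hμ : ∀ i, 0 ≤ μ i) {F G : ι → ι → ι → ι → ℝ}
    (hle : ∀ i ∈ A, ∀ j ∈ B, ∀ k ∈ C, ∀ l ∈ D, F i j k l ≤ G i j k l)
    {a b c d : ι} (ha : a ∈ A) (hb : b ∈ B) (hc : c ∈ C) (hd : d ∈ D)
    (hμa : 0 < μ a) (hμb : 0 < μ b) (hμc : 0 < μ c) (hμd : 0 < μ d)
    (hlt : F a b c d < G a b c d) :
    weightedSum4 μ A B C D F < weightedSum4 μ A B C D G := by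
  simp only [weightedSum4, ← sum_product']
  refine sum_lt_sum (fun ⟨i, j, k, l⟩ hp => ?_) ⟨(a, b, c, d), by simp [ha, hb, hc, hd], ?_⟩
  · obtain ⟨hi, hj, hk, hl⟩ : i ∈ A ∧ j ∈ B ∧ k ∈ C ∧ l ∈ D := by simpa using hp
    have hw : 0 ≤ μ i * μ j * μ k * μ l := by apply_rules [mul_nonneg]
    exact mul_le_mul_of_nonneg_left (hle i hi j hj k hk l hl) hw
  · exact mul_lt_mul_of_pos_left hlt (by positivity)

end WeightedSums

theorem kalmanson_blocks_strict_general {n m : ℕ} (δ : Fin n → Fin n → ℝ)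
    (hK : Kalmanson δ)
    (C : Fin m → Finset (Fin n))
    (hord : ∀ r s : Fin m, r < s → ∀ i ∈ C r, ∀ j ∈ C s, i < j)
    (μ : Fin n → ℝ) (hμ0 : ∀ i, 0 ≤ μ i) (hμ1 : ∀ r, ∑ i ∈ C r, μ i = 1)
    (r s t u : Fin m) (hrs : r < s) (hst : s < t) (htu : t < u)
    (a b x y : Fin n) (ha : a ∈ C r) (hb : b ∈ C s) (hx : x ∈ C t) (hy : y ∈ C u)
    (hμa : 0 < μ a) (hμb : 0 < μ b) (hμx : 0 < μ x) (hμy : 0 < μ y)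
    (hstrict : δ a b + δ x y < δ a x + δ b y) :
    blockDist δ C μ r s + blockDist δ C μ t u <
      blockDist δ C μ r t + blockDist δ C μ s u := by
  have hle : ∀ i ∈ C r, ∀ j ∈ C s, ∀ k ∈ C t, ∀ l ∈ C u, δ i j + δ k l ≤ δ i k + δ j l :=
    fun i hi j hj k hk l hl => (hK i j k l (hord r s hrs i hi j hj) (hord s t hst j hj k hk)
      (hord t u htu k hk l hl)).1
  calc blockDist δ C μ r s + blockDist δ C μ t u
      = weightedSum4 μ (C r) (C s) (C t) (C u) (fun i j k l => δ i j + δ k l) :=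
        (weightedSum4_add_pairs (hμ1 r) (hμ1 s) (hμ1 t) (hμ1 u) δ δ).symm
    _ < weightedSum4 μ (C r) (C s) (C t) (C u) (fun i j k l => δ i k + δ j l) :=
        weightedSum4_lt_weightedSum4 hμ0 hle ha hb hx hy hμa hμb hμx hμy hstrict
    _ = blockDist δ C μ r t + blockDist δ C μ s u :=
        weightedSum4_add_crossed_pairs (hμ1 r) (hμ1 s) (hμ1 t) (hμ1 u) δ δ

/-- let `δ` be a Kalmanson dissimilarity map on `{1,…,n}`, let
`C_1 < … < C_m` be a partition of `{1,…,n}` into consecutive intervals, and let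
`μ ≥ 0` with `Σ_{i∈C_r} μ(i) = 1` for every `r`.  If `r < s < t < u` and there
are `a ∈ C_r`, `b ∈ C_s`, `x ∈ C_t`, `y ∈ C_u` with positive weights and
`δ(a,b) + δ(x,y) < δ(a,x) + δ(b,y)`, then
`D(r,s) + D(t,u) < D(r,t) + D(s,u)`. -/
theorem kalmanson_blocks_strict {n m : ℕ} (δ : Fin n → Fin n → ℝ)
    (hdis : IsDissimilarity δ) (hK : Kalmanson δ)
    (C : Fin m → Finset (Fin n))
    (hne : ∀ r, (C r).Nonempty)
    (hpart : ∀ x : Fin n, ∃! r : Fin m, x ∈ C r)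
    (hord : ∀ r s : Fin m, r < s → ∀ i ∈ C r, ∀ j ∈ C s, i < j)
    (μ : Fin n → ℝ) (hμ0 : ∀ i, 0 ≤ μ i) (hμ1 : ∀ r, ∑ i ∈ C r, μ i = 1)
    (r s t u : Fin m) (hrs : r < s) (hst : s < t) (htu : t < u)
    (a b x y : Fin n) (ha : a ∈ C r) (hb : b ∈ C s) (hx : x ∈ C t) (hy : y ∈ C u)
    (hμa : 0 < μ a) (hμb : 0 < μ b) (hμx : 0 < μ x) (hμy : 0 < μ y)
    (hstrict : δ a b + δ x y < δ a x + δ b y) :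
    blockDist δ C μ r s + blockDist δ C μ t u <
      blockDist δ C μ r t + blockDist δ C μ s u :=
  kalmanson_blocks_strict_general δ hK C hord μ hμ0 hμ1 r s t u hrs hst htu a b x y ha hb hx hy hμa
    hμb hμx hμy hstrict
end

section
/- Let 𝒮 be a split system on {1,…,n} in which every split is circular with respect to the identity circular ordering, let λ_S ≥ 0 for S ∈ 𝒮, and let δ_𝒮 = Σ_{S∈𝒮} λ_S δ_S. Then for all indices i < j < k < l: δ_𝒮(i,k) + δ_𝒮(j,l) − δ_𝒮(i,j) − δ_𝒮(k,l) = 2·Σ λ_S, where the sum on the right is over all splits S = {A,B} ∈ 𝒮 with i,j ∈ A and k,l ∈ B. -/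
/-! For `i < j < k < l` a split contributes `δ_S(i,k) + δ_S(j,l) − δ_S(i,j) − δ_S(k,l) ∈ {0, 2}`,
the value `2` occurring exactly when it separates `{i,j}` from `{k,l}`, unless it separates
`{i,k}` from `{j,l}`. A circular split cannot do the latter, because one of its blocks is an
interval of `1 < ⋯ < n`, and an interval containing two of the four points contains
everything between them. Summing with the weights gives the theorem. -/

theorem Set.OrdConnected.mem_iff_of_interleaved {α : Type*} [Preorder α] {s : Set α}
    (hs : s.OrdConnected) {i j k l : α} (hij : i ≤ j) (hjk : j ≤ k) (hkl : k ≤ l)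
    (hik : i ∈ s ↔ k ∈ s) (hjl : j ∈ s ↔ l ∈ s) : i ∈ s ↔ j ∈ s := by
  by_cases hi : i ∈ s
  · exact iff_of_true hi (hs.out hi (hik.mp hi) ⟨hij, hjk⟩)
  · refine iff_of_false hi fun hj => ?_
    exact hi (hik.mpr (hs.out hj (hjl.mp hj) ⟨hjk, hkl⟩))

namespace Split

variable {n : ℕ} (S : Split n)

theorem mem_B_iff_not_mem_A (x : Fin n) : x ∈ S.B ↔ x ∉ S.A := by
  have hx : x ∈ S.A ∪ S.B := S.hcover ▸ Finset.mem_univ x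
  constructor
  · exact fun hB hA => Finset.disjoint_left.mp S.hdisj hA hB
  · exact fun hA => (Finset.mem_union.mp hx).resolve_left hA

theorem mem_A_iff_of_interleaved_of_isCircularSplit (hS : IsCircularSplit S)
    {i j k l : Fin n} (hij : i ≤ j) (hjk : j ≤ k) (hkl : k ≤ l)
    (hik : i ∈ S.A ↔ k ∈ S.A) (hjl : j ∈ S.A ↔ l ∈ S.A) : i ∈ S.A ↔ j ∈ S.A := by
  obtain ⟨a, b, -, hAB⟩ := hS
  have hIoc : (↑(Finset.Ioc a b) : Set (Fin n)).OrdConnected := by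
    rw [Finset.coe_Ioc]; exact Set.ordConnected_Ioc
  rcases hAB with hA | hB
  · rw [hA] at hik hjl ⊢
    exact hIoc.mem_iff_of_interleaved hij hjk hkl hik hjl
  · simp only [← not_iff_not (a := _ ∈ S.A), ← mem_B_iff_not_mem_A, hB] at hik hjl ⊢
    exact hIoc.mem_iff_of_interleaved hij hjk hkl hik hjl

open scoped Classical in
theorem splitMetric_four_point {i j k l : Fin n}
    (hinter : (i ∈ S.A ↔ k ∈ S.A) → (j ∈ S.A ↔ l ∈ S.A) → (i ∈ S.A ↔ j ∈ S.A)) :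
    splitMetric S i k + splitMetric S j l - splitMetric S i j - splitMetric S k l =
      if SeparatesPairs S i j k l then 2 else 0 := by
  simp only [splitMetric, SeparatesPairs, mem_B_iff_not_mem_A]
  by_cases hi : i ∈ S.A <;> by_cases hj : j ∈ S.A <;> by_cases hk : k ∈ S.A <;>
    by_cases hl : l ∈ S.A <;> simp_all <;> norm_num

end Split

open scoped Classical in
theorem kalmanson_gap_eq_twice_separating_weight_general {n : ℕ}
    (𝒮 : Finset (Split n)) (w : Split n → ℝ)
    (hcirc : ∀ S ∈ 𝒮, IsCircularSplit S)
    (δ : Fin n → Fin n → ℝ)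
    (hδ : ∀ x y, δ x y = ∑ S ∈ 𝒮, w S * splitMetric S x y) :
    ∀ i j k l : Fin n, i < j → j < k → k < l →
      δ i k + δ j l - δ i j - δ k l =
        2 * ∑ S ∈ 𝒮.filter (fun S => SeparatesPairs S i j k l), w S := by
  intro i j k l hij hjk hkl
  simp only [hδ, ← Finset.sum_add_distrib, ← Finset.sum_sub_distrib, Finset.mul_sum,
    Finset.sum_filter]
  refine Finset.sum_congr rfl fun S hS => ?_
  have hgap := S.splitMetric_four_point
    (S.mem_A_iff_of_interleaved_of_isCircularSplit (hcirc S hS) hij.le hjk.le hkl.le)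
  calc w S * splitMetric S i k + w S * splitMetric S j l - w S * splitMetric S i j
        - w S * splitMetric S k l
      = w S * (splitMetric S i k + splitMetric S j l - splitMetric S i j
          - splitMetric S k l) := by ring
    _ = 2 * if SeparatesPairs S i j k l then w S else 0 := by
      rw [hgap]; split_ifs <;> ring

open scoped Classical in
/-- let `δ_𝒮 = Σ_{S∈𝒮} λ_S δ_S` with every `S ∈ 𝒮` circular with
respect to the identity circular ordering and `λ_S ≥ 0`.  Then for all
`i < j < k < l`:
`δ_𝒮(i,k) + δ_𝒮(j,l) − δ_𝒮(i,j) − δ_𝒮(k,l) = 2·Σ λ_S`,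
the sum being over all splits `S = {A,B} ∈ 𝒮` with `i,j ∈ A` and `k,l ∈ B`. -/
theorem kalmanson_gap_eq_twice_separating_weight {n : ℕ}
    (𝒮 : Finset (Split n)) (w : Split n → ℝ)
    (hcirc : ∀ S ∈ 𝒮, IsCircularSplit S) (hw : ∀ S ∈ 𝒮, 0 ≤ w S)
    (δ : Fin n → Fin n → ℝ)
    (hδ : ∀ x y, δ x y = ∑ S ∈ 𝒮, w S * splitMetric S x y) :
    ∀ i j k l : Fin n, i < j → j < k → k < l →
      δ i k + δ j l - δ i j - δ k l =
        2 * ∑ S ∈ 𝒮.filter (fun S => SeparatesPairs S i j k l), w S :=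
  kalmanson_gap_eq_twice_separating_weight_general 𝒮 w hcirc δ hδ
end

section
/- (Optimal radius) Let 𝒮 be a split system on {1,…,n} in which every split is circular with respect to the identity circular ordering, with weights λ_S > 0 for every S ∈ 𝒮, let δ_𝒮 = Σ_{S∈𝒮} λ_S δ_S, and let ε = min_{S∈𝒮} λ_S. Let δ be any dissimilarity map with |δ(x,y) − δ_𝒮(x,y)| < ε/2 for all x,y. Then for all indices i < j < k < l: (a) if some split {A,B} ∈ 𝒮 has i,j ∈ A and k,l ∈ B, then δ(i,j) + δ(k,l) < δ(i,k) + δ(j,l); and (b) if some split {A,B} ∈ 𝒮 has j,k ∈ A and i,l ∈ B, then δ(i,l) + δ(j,k) < δ(i,k) + δ(j,l). -/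
lemma Split.mem_A_iff_not_B {n : ℕ} (S : Split n) (x : Fin n) :
    x ∈ S.A ↔ x ∉ S.B := by
  constructor
  · intro h hb; exact Finset.disjoint_left.mp S.hdisj h hb
  · intro h
    have := Finset.mem_univ x
    rw [← S.hcover, Finset.mem_union] at this
    tauto

lemma sm_zero {n : ℕ} (S : Split n) {x y : Fin n}
    (h : (x ∈ S.A ∧ y ∈ S.A) ∨ (x ∈ S.B ∧ y ∈ S.B)) : splitMetric S x y = 0 := by
  have hx := S.mem_A_iff_not_B x
  have hy := S.mem_A_iff_not_B y
  rw [splitMetric, if_pos]; tauto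

lemma sm_one {n : ℕ} (S : Split n) {x y : Fin n}
    (h : (x ∈ S.A ∧ y ∈ S.B) ∨ (x ∈ S.B ∧ y ∈ S.A)) : splitMetric S x y = 1 := by
  have hx := S.mem_A_iff_not_B x
  have hy := S.mem_A_iff_not_B y
  rw [splitMetric, if_neg]; tauto

/-- quadrangle inequalities for a circular split -/
lemma sm_quad {n : ℕ} (S : Split n) (hc : IsCircularSplit S)
    (i j k l : Fin n) (hij : i ≤ j) (hjk : j ≤ k) (hkl : k ≤ l) :
    splitMetric S i j + splitMetric S k l ≤ splitMetric S i k + splitMetric S j l ∧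
    splitMetric S i l + splitMetric S j k ≤ splitMetric S i k + splitMetric S j l := by
  obtain ⟨a, b, hab, hS⟩ := hc
  set Q : Fin n → Prop := fun z => z ∈ Finset.Ioc a b with hQ
  have hm : ∀ x y, splitMetric S x y = if Q x ↔ Q y then 0 else 1 := by
    intro x y
    rcases hS with hS | hS
    · simp [splitMetric, hQ, ← hS]
    · have hx := S.mem_A_iff_not_B x
      have hy := S.mem_A_iff_not_B y
      have hiff : (x ∈ S.A ↔ y ∈ S.A) ↔ (Q x ↔ Q y) := by
        have hqx : Q x ↔ x ∈ S.B := by rw [hQ, hS]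
        have hqy : Q y ↔ y ∈ S.B := by rw [hQ, hS]
        rw [hqx, hqy]; tauto
      rw [splitMetric]
      by_cases hc : Q x ↔ Q y
      · rw [if_pos (hiff.mpr hc), if_pos hc]
      · rw [if_neg (fun h => hc (hiff.mp h)), if_neg hc]
  have hconv : ∀ x y z : Fin n, x ≤ y → y ≤ z → Q x → Q z → Q y := by
    intro x y z h1 h2 hx hz
    simp only [hQ, Finset.mem_Ioc] at *
    exact ⟨lt_of_lt_of_le hx.1 h1, le_trans h2 hz.2⟩
  have c1 := hconv i j k hij hjk
  have c2 := hconv i j l hij (le_trans hjk hkl)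
  have c3 := hconv j k l hjk hkl
  have c4 := hconv i k l (le_trans hij hjk) hkl
  rw [hm, hm, hm, hm, hm, hm]
  by_cases hi : Q i <;> by_cases hj : Q j <;> by_cases hk : Q k <;> by_cases hl : Q l
  all_goals
    first
      | exact absurd (c1 hi hk) hj
      | exact absurd (c2 hi hl) hj
      | exact absurd (c3 hj hl) hk
      | exact absurd (c4 hi hl) hk
      | norm_num [hi, hj, hk, hl]

lemma gap_sum {n : ℕ} (𝒮 : Finset (Split n)) (h𝒮 : 𝒮.Nonempty) (w : Split n → ℝ)
    (hw : ∀ S ∈ 𝒮, 0 < w S) (f : Split n → ℝ) (hf0 : ∀ S ∈ 𝒮, 0 ≤ f S)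
    {S0 : Split n} (hS0 : S0 ∈ 𝒮) (hf2 : f S0 = 2) :
    2 * 𝒮.inf' h𝒮 w ≤ ∑ S ∈ 𝒮, w S * f S := by
  have h1 : 𝒮.inf' h𝒮 w ≤ w S0 := Finset.inf'_le w hS0
  have h2 : w S0 * f S0 ≤ ∑ S ∈ 𝒮, w S * f S :=
    Finset.single_le_sum (fun S hS => mul_nonneg (hw S hS).le (hf0 S hS)) hS0
  rw [hf2] at h2
  linarith

/-- Optimal radius: let `𝒮` be a split system on `{1,…,n}`,
circular with respect to the identity circular ordering, with weights
`λ_S > 0`, let `δ_𝒮 = Σ_{S∈𝒮} λ_S δ_S` and `ε = min_{S∈𝒮} λ_S`.  If `δ` is a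
dissimilarity map with `|δ(x,y) − δ_𝒮(x,y)| < ε/2` for all `x,y`, then for
all `i < j < k < l`:
(a) if some split of `𝒮` separates `{i,j}` from `{k,l}` then
`δ(i,j) + δ(k,l) < δ(i,k) + δ(j,l)`; and
(b) if some split of `𝒮` separates `{j,k}` from `{i,l}` then
`δ(i,l) + δ(j,k) < δ(i,k) + δ(j,l)`. -/
theorem optimal_radius {n : ℕ} (𝒮 : Finset (Split n)) (h𝒮 : 𝒮.Nonempty)
    (w : Split n → ℝ)
    (hcirc : ∀ S ∈ 𝒮, IsCircularSplit S) (hw : ∀ S ∈ 𝒮, 0 < w S)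
    (δS : Fin n → Fin n → ℝ)
    (hδS : ∀ x y, δS x y = ∑ S ∈ 𝒮, w S * splitMetric S x y)
    (ε : ℝ) (hε : ε = 𝒮.inf' h𝒮 w)
    (δ : Fin n → Fin n → ℝ)
    (hsym : ∀ x y, δ x y = δ y x) (hnn : ∀ x y, 0 ≤ δ x y)
    (hdiag : ∀ x, δ x x = 0)
    (hclose : ∀ x y, |δ x y - δS x y| < ε / 2) :
    ∀ i j k l : Fin n, i < j → j < k → k < l →
      ((∃ S ∈ 𝒮, SeparatesPairs S i j k l) →
          δ i j + δ k l < δ i k + δ j l) ∧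
      ((∃ S ∈ 𝒮, SeparatesPairs S j k i l) →
          δ i l + δ j k < δ i k + δ j l) := by
  intro i j k l hij hjk hkl
  have habs : ∀ x y, δ x y - δS x y < ε / 2 ∧ -(ε/2) < δ x y - δS x y := by
    intro x y
    have := abs_lt.mp (hclose x y)
    exact ⟨this.2, this.1⟩
  constructor
  · rintro ⟨S0, hS0, hsep⟩
    set f : Split n → ℝ := fun S =>
      splitMetric S i k + splitMetric S j l - splitMetric S i j - splitMetric S k l with hf
    have hsum : δS i k + δS j l - δS i j - δS k l = ∑ S ∈ 𝒮, w S * f S := by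
      simp only [hδS, hf]
      rw [← Finset.sum_add_distrib, ← Finset.sum_sub_distrib, ← Finset.sum_sub_distrib]
      exact Finset.sum_congr rfl fun S _ => by ring
    have hf0 : ∀ S ∈ 𝒮, 0 ≤ f S := by
      intro S hS
      have := (sm_quad S (hcirc S hS) i j k l hij.le hjk.le hkl.le).1
      simp only [hf]; linarith
    have hf2 : f S0 = 2 := by
      rcases hsep with ⟨h1, h2, h3, h4⟩ | ⟨h1, h2, h3, h4⟩
      · simp only [hf]
        rw [sm_one S0 (Or.inl ⟨h1, h3⟩), sm_one S0 (Or.inl ⟨h2, h4⟩),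
          sm_zero S0 (Or.inl ⟨h1, h2⟩), sm_zero S0 (Or.inr ⟨h3, h4⟩)]
        norm_num
      · simp only [hf]
        rw [sm_one S0 (Or.inr ⟨h1, h3⟩), sm_one S0 (Or.inr ⟨h2, h4⟩),
          sm_zero S0 (Or.inr ⟨h1, h2⟩), sm_zero S0 (Or.inl ⟨h3, h4⟩)]
        norm_num
    have hgap : 2 * ε ≤ δS i k + δS j l - δS i j - δS k l := by
      rw [hsum, hε]; exact gap_sum 𝒮 h𝒮 w hw f hf0 hS0 hf2
    have a1 := habs i j; have a2 := habs k l; have a3 := habs i k; have a4 := habs j l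
    linarith [a1.1, a1.2, a2.1, a2.2, a3.1, a3.2, a4.1, a4.2]
  · rintro ⟨S0, hS0, hsep⟩
    set f : Split n → ℝ := fun S =>
      splitMetric S i k + splitMetric S j l - splitMetric S i l - splitMetric S j k with hf
    have hsum : δS i k + δS j l - δS i l - δS j k = ∑ S ∈ 𝒮, w S * f S := by
      simp only [hδS, hf]
      rw [← Finset.sum_add_distrib, ← Finset.sum_sub_distrib, ← Finset.sum_sub_distrib]
      exact Finset.sum_congr rfl fun S _ => by ring
    have hf0 : ∀ S ∈ 𝒮, 0 ≤ f S := by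
      intro S hS
      have := (sm_quad S (hcirc S hS) i j k l hij.le hjk.le hkl.le).2
      simp only [hf]; linarith
    have hf2 : f S0 = 2 := by
      rcases hsep with ⟨h1, h2, h3, h4⟩ | ⟨h1, h2, h3, h4⟩
      · -- j,k ∈ A; i,l ∈ B
        simp only [hf]
        rw [sm_one S0 (Or.inr ⟨h3, h2⟩), sm_one S0 (Or.inl ⟨h1, h4⟩),
          sm_zero S0 (Or.inr ⟨h3, h4⟩), sm_zero S0 (Or.inl ⟨h1, h2⟩)]
        norm_num
      · simp only [hf]
        rw [sm_one S0 (Or.inl ⟨h3, h2⟩), sm_one S0 (Or.inr ⟨h1, h4⟩),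
          sm_zero S0 (Or.inl ⟨h3, h4⟩), sm_zero S0 (Or.inr ⟨h1, h2⟩)]
        norm_num
    have hgap : 2 * ε ≤ δS i k + δS j l - δS i l - δS j k := by
      rw [hsum, hε]; exact gap_sum 𝒮 h𝒮 w hw f hf0 hS0 hf2
    have a1 := habs i l; have a2 := habs j k; have a3 := habs i k; have a4 := habs j l
    linarith [a1.1, a1.2, a2.1, a2.2, a3.1, a3.2, a4.1, a4.2]
end

section
/- Let δ be a dissimilarity map on {1,…,n} that satisfies the strict Kalmanson conditions with respect to the identity circular ordering, i.e., for all i < j < k < l: δ(i,j) + δ(k,l) < δ(i,k) + δ(j,l) and δ(i,l) + δ(j,k) < δ(i,k) + δ(j,l) (this is the genericity condition for a circular decomposable metric). Let σ be a permutation of {1,…,n} whose associated circular ordering (σ(1), σ(2), …, σ(n)) is not equal to the identity circular ordering (1,2,…,n) up to rotation and reflection of the cycle. Then the tour length of σ strictly exceeds that of the identity: Σ_{i=1}^n δ(σ(i), σ(i+1)) > Σ_{i=1}^n δ(i, i+1), where indices are taken cyclically (σ(n+1) = σ(1) and n+1 is identified with 1). -/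
/-- The strict Kalmanson conditions with respect to the identity circular
ordering (the genericity condition for a circular decomposable metric). -/
def StrictKalmanson {n : ℕ} (δ : Fin n → Fin n → ℝ) : Prop :=
  ∀ i j k l : Fin n, i < j → j < k → k < l →
    δ i j + δ k l < δ i k + δ j l ∧ δ i l + δ j k < δ i k + δ j l

/-- The circular ordering `(σ(1),…,σ(n))` coincides with the identity circular
ordering `(1,…,n)` up to rotation and reflection of the cycle. -/
def DihedrallyIdentity {n : ℕ} [NeZero n] (σ : Equiv.Perm (Fin n)) : Prop :=
  ∃ c : Fin n, (∀ k : Fin n, σ k = k + c) ∨ (∀ k : Fin n, σ k = c - k)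

/-! For crossing chords `{a, b}` and `{w, z}` of the identity cycle, the strict Kalmanson
inequalities say that the crossing pairing is strictly the longest of the three pairings.
If a tour is not the identity cycle up to rotation and reflection, one of its edges `{a, b}`
joins two vertices that are not neighbours on the cycle; both arcs between them then contain
vertices, so a later edge `{w, z}` of the tour jumps from one arc to the other and crosses
`{a, b}`. Reversing the stretch of the tour between these two edges (a 2-opt move) replaces
`δ a b + δ w z` by `δ a w + δ b z` and strictly shortens the tour. Hence a shortest tour is
dihedrally the identity, all such tours have the identity's length, and every other tour is
strictly longer than a shortest one. -/

open Set Fin.CommRing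
open Finset (range sum_range_add sum_range_succ sum_range_succ' sum_range_reflect sum_congr)

variable {α M : Type*} [AddCommMonoid M]

def tourLength {n : ℕ} [NeZero n] (δ : α → α → M) (f : Fin n → α) : M :=
  ∑ i : Fin n, δ (f i) (f (i + 1))

theorem Nat.exists_not_iff_succ {P : ℕ → Prop} {i j : ℕ} (hij : i ≤ j)
    (h : ¬(P i ↔ P j)) : ∃ q, i ≤ q ∧ q < j ∧ ¬(P q ↔ P (q + 1)) := by
  induction j, hij using Nat.le_induction with
  | base => exact absurd Iff.rfl h
  | succ j hij ih =>
    by_cases hj : P j ↔ P (j + 1)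
    · obtain ⟨q, hiq, hqj, hq⟩ := ih fun h' => h (h'.trans hj)
      exact ⟨q, hiq, hqj.trans j.lt_succ_self, hq⟩
    · exact ⟨j, hij, j.lt_succ_self, hj⟩

def segmentReversal (m j : ℕ) : ℕ := if 1 ≤ j ∧ j ≤ m then m + 1 - j else j

theorem segmentReversal_involutive (m : ℕ) : Function.Involutive (segmentReversal m) := by
  intro j
  unfold segmentReversal
  split_ifs <;> omega

theorem segmentReversal_lt {m j N : ℕ} (hm : m < N) (hj : j < N) : segmentReversal m j < N := by
  unfold segmentReversal
  split_ifs <;> omega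

def finSegmentReversal {n : ℕ} (m : ℕ) (hm : m < n) : Equiv.Perm (Fin n) :=
  Function.Involutive.toPerm (fun u => ⟨segmentReversal m u, segmentReversal_lt hm u.2⟩)
    fun u => Fin.ext (segmentReversal_involutive m u)

theorem sum_segmentReversal_add {δ : α → α → M}
    (hsym : ∀ x y, δ x y = δ y x) (g : ℕ → α) {m N : ℕ} (hm : 1 ≤ m) (hmN : m < N) :
    ∑ j ∈ range N, δ (g (segmentReversal m j)) (g (segmentReversal m (j + 1)))
        + (δ (g 0) (g 1) + δ (g m) (g (m + 1)))
      = ∑ j ∈ range N, δ (g j) (g (j + 1)) + (δ (g 0) (g m) + δ (g 1) (g (m + 1))) := by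
  obtain ⟨k, rfl⟩ : ∃ k, m = k + 1 := ⟨m - 1, by omega⟩
  obtain ⟨t, rfl⟩ : ∃ t, N = k + 2 + t := ⟨N - (k + 2), by omega⟩
  have hfix : ∀ j, k + 1 < j → segmentReversal (k + 1) j = j := fun j hj => if_neg (by omega)
  have hmid : ∀ j, 1 ≤ j → j ≤ k + 1 → segmentReversal (k + 1) j = k + 2 - j :=
    fun j h1 h2 => if_pos ⟨h1, h2⟩
  have middle : ∑ i ∈ range k, δ (g (segmentReversal (k + 1) (i + 1)))
        (g (segmentReversal (k + 1) (i + 1 + 1)))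
      = ∑ i ∈ range k, δ (g (i + 1)) (g (i + 1 + 1)) := by
    rw [← sum_range_reflect]
    refine sum_congr rfl fun i hi => ?_
    rw [Finset.mem_range] at hi
    rw [hmid _ (by omega) (by omega), hmid _ (by omega) (by omega), hsym]
    congr 2 <;> omega
  have tail : ∑ x ∈ range t, δ (g (segmentReversal (k + 1) (k + 2 + x)))
        (g (segmentReversal (k + 1) (k + 2 + x + 1)))
      = ∑ x ∈ range t, δ (g (k + 2 + x)) (g (k + 2 + x + 1)) :=
    sum_congr rfl fun x _ => by rw [hfix _ (by omega), hfix _ (by omega)]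
  have split : ∀ f : ℕ → M, ∑ j ∈ range (k + 2 + t), f j
      = f 0 + ∑ i ∈ range k, f (i + 1) + f (k + 1) + ∑ x ∈ range t, f (k + 2 + x) := fun f => by
    rw [sum_range_add, sum_range_succ, sum_range_succ', add_comm (∑ i ∈ range k, _)]
  rw [split, split, middle, tail, hmid (k + 1) (by omega) le_rfl, hmid 1 le_rfl (by omega),
    show segmentReversal (k + 1) 0 = 0 from rfl, hfix (k + 2) (by omega),
    show k + 2 - (k + 1) = 1 by omega, show k + 2 - 1 = k + 1 by omega]
  abel

section Tours

variable {n : ℕ} [NeZero n]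

theorem tourLength_eq_sum_range (δ : α → α → M) (f : Fin n → α) :
    tourLength δ f = ∑ j ∈ range n, δ (f j) (f ↑(j + 1)) := by
  rw [tourLength, ← Fin.sum_univ_eq_sum_range (fun j => δ (f j) (f ↑(j + 1)))]
  simp

theorem tourLength_comp_addLeft (δ : α → α → M) (f : Fin n → α) (p : Fin n) :
    tourLength δ (fun u => f (p + u)) = tourLength δ f :=
  Fintype.sum_equiv (Equiv.addLeft p) _ _ fun u => by simp [add_assoc]

theorem tourLength_eq_of_dihedrallyIdentity {δ : Fin n → Fin n → M}
    (hsym : ∀ i j, δ i j = δ j i) {ν : Equiv.Perm (Fin n)} (hν : DihedrallyIdentity ν) :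
    tourLength δ ν = tourLength δ id := by
  obtain ⟨c, hν | hν⟩ := hν
  · refine Fintype.sum_equiv (Equiv.addRight c) _ _ fun k => ?_
    simp only [hν, Equiv.coe_addRight, id]
    ring_nf
  · refine Fintype.sum_equiv (Equiv.subLeft (c - 1)) _ _ fun k => ?_
    simp only [hν, Equiv.subLeft_apply, id]
    rw [hsym]
    congr 1 <;> ring

theorem finSegmentReversal_natCast {m : ℕ} (hm : m < n) {j : ℕ} (hj : j ≤ n) :
    finSegmentReversal m hm j = (segmentReversal m j : Fin n) := by
  rcases hj.lt_or_eq with hj | rfl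
  · ext
    rw [Fin.val_cast_of_lt (segmentReversal_lt hm hj)]
    exact congrArg (segmentReversal m) (Fin.val_cast_of_lt hj)
  · rw [show segmentReversal m j = j from if_neg (by omega), Fin.natCast_self]
    rfl

theorem tourLength_comp_finSegmentReversal_add {δ : α → α → M} (hsym : ∀ x y, δ x y = δ y x)
    (f : Fin n → α) {m : ℕ} (hm : 1 ≤ m) (hmn : m + 1 < n) :
    tourLength δ (f ∘ finSegmentReversal m (by omega)) + (δ (f 0) (f 1) + δ (f m) (f ↑(m + 1)))
      = tourLength δ f + (δ (f 0) (f m) + δ (f 1) (f ↑(m + 1))) := by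
  have key := sum_segmentReversal_add hsym (fun j : ℕ => f j) hm (by omega : m < n)
  rw [Nat.cast_zero, Nat.cast_one] at key
  rw [tourLength_eq_sum_range, tourLength_eq_sum_range, ← key]
  congr 1
  refine sum_congr rfl fun j hj => ?_
  rw [Finset.mem_range] at hj
  simp only [Function.comp_apply, finSegmentReversal_natCast _ hj.le,
    finSegmentReversal_natCast _ (Nat.succ_le_of_lt hj)]

theorem exists_perm_tourLength_lt {δ : Fin n → Fin n → ℝ} (hsym : ∀ i j, δ i j = δ j i)
    (τ : Equiv.Perm (Fin n)) {m : ℕ} (hm : 1 ≤ m) (hmn : m + 1 < n)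
    (hlt : δ (τ 0) (τ m) + δ (τ 1) (τ ↑(m + 1)) < δ (τ 0) (τ 1) + δ (τ m) (τ ↑(m + 1))) :
    ∃ τ' : Equiv.Perm (Fin n), tourLength δ τ' < tourLength δ τ := by
  refine ⟨(finSegmentReversal m (by omega)).trans τ, ?_⟩
  have := tourLength_comp_finSegmentReversal_add hsym τ hm hmn
  rw [Equiv.coe_trans]
  linarith

end Tours

theorem eq_add_mul_of_forall_sub_eq {n : ℕ} [NeZero n] {f : Fin n → Fin n} {s : Fin n}
    (h : ∀ u, f (u + 1) - f u = s) (u : Fin n) : f u = f 0 + u * s := by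
  suffices ∀ k : ℕ, f k = f 0 + k * s by simpa using this u.val
  intro k
  induction k with
  | zero => simp
  | succ k ih => rw [Nat.cast_succ, ← sub_add_cancel (f (k + 1)) (f k), h, ih]; ring

theorem dihedrallyIdentity_of_forall_sub_eq_one_or_neg_one {n : ℕ} [NeZero n]
    {σ : Equiv.Perm (Fin n)} (h : ∀ u, σ (u + 1) - σ u = 1 ∨ σ (u + 1) - σ u = -1) :
    DihedrallyIdentity σ := by
  -- two opposite consecutive steps return to the same vertex, which forces `1 + 1 = 0`
  have hconst : ∀ u, (σ (u + 1 + 1) - σ (u + 1)) - (σ (u + 1) - σ u) = 0 := by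
    intro u
    rcases h u with h0 | h0 <;> rcases h (u + 1) with h1 | h1
    · linear_combination h1 - h0
    · have hu := σ.injective (show σ (u + 1 + 1) = σ u by linear_combination h1 + h0)
      linear_combination h1 - h0 - hu
    · have hu := σ.injective (show σ (u + 1 + 1) = σ u by linear_combination h1 + h0)
      linear_combination h1 - h0 + hu
    · linear_combination h1 - h0
  have hstep : ∀ u, σ (u + 1) - σ u = σ (0 + 1) - σ 0 := by
    simpa using eq_add_mul_of_forall_sub_eq (f := fun u => σ (u + 1) - σ u) hconst
  have haffine := eq_add_mul_of_forall_sub_eq hstep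
  rcases h 0 with h0 | h0
  · exact ⟨σ 0, Or.inl fun k => by rw [haffine, h0]; ring⟩
  · exact ⟨σ 0, Or.inr fun k => by rw [haffine, h0]; ring⟩

theorem StrictKalmanson.add_lt_add_of_mem_uIoo {n : ℕ} {δ : Fin n → Fin n → ℝ}
    (hK : StrictKalmanson δ) (hsym : ∀ i j, δ i j = δ j i) {a b w z : Fin n}
    (hw : w ∈ uIoo a b) (hz : z ∉ uIcc a b) :
    δ a w + δ b z < δ a b + δ w z ∧ δ a z + δ b w < δ a b + δ w z := by
  wlog hab : a ≤ b generalizing a b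
  · obtain ⟨h1, h2⟩ := this (uIoo_comm a b ▸ hw) (uIcc_comm a b ▸ hz) (le_of_not_ge hab)
    rw [hsym b a] at h1 h2
    constructor <;> linarith
  rw [uIoo_of_le hab] at hw
  rw [uIcc_of_le hab, mem_Icc, not_and_or, not_le, not_le] at hz
  rcases hz with hza | hbz
  · obtain ⟨h1, h2⟩ := hK z a w b hza hw.1 hw.2
    constructor <;> linarith [hsym z a, hsym z b, hsym z w, hsym w b]
  · obtain ⟨h1, h2⟩ := hK a w b z hw.1 hw.2 hbz
    constructor <;> linarith [hsym w b]

theorem nonempty_uIoo_and_compl_uIcc_of_ne_add_one {n : ℕ} [NeZero n] {a b : Fin n} (hab : a ≠ b)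
    (h1 : b ≠ a + 1) (h2 : a ≠ b + 1) : (uIoo a b).Nonempty ∧ (uIcc a b)ᶜ.Nonempty := by
  wlog hlt : a < b generalizing a b
  · rw [uIoo_comm, uIcc_comm]
    exact this hab.symm h2 h1 (lt_of_le_of_ne (not_lt.1 hlt) hab.symm)
  rw [uIoo_of_lt hlt, uIcc_of_le hlt.le]
  have hval : ∀ c : Fin n, (c + 1).val = (c.val + 1) % n := fun c => by
    rw [Fin.val_add, Fin.val_one', Nat.add_mod_mod]
  have hgap : a.val + 1 < b.val := by
    by_contra hle
    exact h1 (Fin.ext (by rw [hval, Nat.mod_eq_of_lt (by omega)]; omega))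
  refine ⟨⟨⟨a.val + 1, by omega⟩, Fin.lt_def.2 (by dsimp only; omega),
    Fin.lt_def.2 (by dsimp only; omega)⟩, ?_⟩
  by_cases hb : b.val + 1 < n
  · exact ⟨⟨b.val + 1, hb⟩, fun h => absurd (Fin.le_def.1 h.2) (by dsimp only; omega)⟩
  · have ha : a.val ≠ 0 := fun ha =>
      h2 (Fin.ext (by rw [hval, show b.val + 1 = n by omega, Nat.mod_self, ha]))
    exact ⟨0, fun h => ha (by have := Fin.le_def.1 h.1; simpa using this)⟩

theorem exists_consecutive_mem_uIoo_notMem_uIcc {n : ℕ} [NeZero n] (τ : Equiv.Perm (Fin n))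
    (hin : (uIoo (τ 0) (τ 1)).Nonempty) (hout : (uIcc (τ 0) (τ 1))ᶜ.Nonempty) :
    ∃ m : ℕ, 1 ≤ m ∧ m + 1 < n ∧
      (τ m ∈ uIoo (τ 0) (τ 1) ∧ τ ↑(m + 1) ∉ uIcc (τ 0) (τ 1) ∨
        τ ↑(m + 1) ∈ uIoo (τ 0) (τ 1) ∧ τ m ∉ uIcc (τ 0) (τ 1)) := by
  set P : ℕ → Prop := fun j => τ j ∈ uIoo (τ 0) (τ 1)
  have hpos : ∀ v, v ≠ τ 0 → v ≠ τ 1 → ∃ u : ℕ, 2 ≤ u ∧ u < n ∧ τ u = v := by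
    intro v h0 h1
    obtain ⟨u, hu, rfl⟩ : ∃ u : ℕ, u < n ∧ τ u = v := ⟨_, (τ.symm v).isLt, by simp⟩
    refine ⟨u, ?_, hu, rfl⟩
    by_contra hlt
    interval_cases u
    · exact h0 (by simp)
    · exact h1 (by simp)
  have hcast : ∀ i j : ℕ, i < n → j < n → (i : Fin n) = j → i = j := fun i j hi hj h => by
    simpa [Fin.val_cast_of_lt hi, Fin.val_cast_of_lt hj] using congrArg Fin.val h
  have hnotMem : ∀ j : ℕ, 2 ≤ j → j < n → ¬P j → τ j ∉ uIcc (τ 0) (τ 1) := by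
    intro j hj hjn hP hmem
    have h0 : τ j ≠ τ 0 := fun h => by
      have := hcast j 0 hjn (by omega) (by simpa using τ.injective h); omega
    have h1 : τ j ≠ τ 1 := fun h => by
      have := hcast j 1 hjn (by omega) (by simpa using τ.injective h); omega
    simp only [P, uIoo_eq_union, mem_union, mem_Ioo, mem_uIcc] at hP hmem
    omega
  obtain ⟨x, hx⟩ := hin
  obtain ⟨y, hy⟩ := hout
  obtain ⟨u₁, hu₁, hu₁n, rfl⟩ := hpos x (ne_of_mem_of_not_mem hx left_notMem_uIoo)
    (ne_of_mem_of_not_mem hx right_notMem_uIoo)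
  obtain ⟨u₂, hu₂, hu₂n, rfl⟩ := hpos y (ne_of_mem_of_not_mem left_mem_uIcc hy).symm
    (ne_of_mem_of_not_mem right_mem_uIcc hy).symm
  have hP₁ : P u₁ := hx
  have hP₂ : ¬P u₂ := fun h => hy (uIoo_subset_uIcc_self h)
  obtain ⟨q, hq₁, hq₂, hq⟩ : ∃ q, min u₁ u₂ ≤ q ∧ q < max u₁ u₂ ∧ ¬(P q ↔ P (q + 1)) := by
    rcases le_total u₁ u₂ with h | h
    · simpa [h] using Nat.exists_not_iff_succ h (by tauto : ¬(P u₁ ↔ P u₂))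
    · simpa [h] using Nat.exists_not_iff_succ h (by tauto : ¬(P u₂ ↔ P u₁))
  refine ⟨q, by omega, by omega, ?_⟩
  have := hnotMem q (by omega) (by omega)
  have := hnotMem (q + 1) (by omega) (by omega)
  by_cases hPq : P q
  · exact Or.inl ⟨hPq, by tauto⟩
  · exact Or.inr ⟨by tauto, by tauto⟩

theorem exists_tourLength_lt_of_not_dihedrallyIdentity {n : ℕ} [NeZero n]
    {δ : Fin n → Fin n → ℝ} (hsym : ∀ i j, δ i j = δ j i) (hK : StrictKalmanson δ)
    {σ : Equiv.Perm (Fin n)} (hσ : ¬DihedrallyIdentity σ) :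
    ∃ σ' : Equiv.Perm (Fin n), tourLength δ σ' < tourLength δ σ := by
  obtain ⟨p, hp⟩ : ∃ p, ¬(σ (p + 1) - σ p = 1 ∨ σ (p + 1) - σ p = -1) := by
    by_contra! h
    exact hσ (dihedrallyIdentity_of_forall_sub_eq_one_or_neg_one h)
  set τ := (Equiv.addLeft p).trans σ
  have hτ0 : τ 0 = σ p := by simp [τ]
  have hτ1 : τ 1 = σ (p + 1) := by simp [τ]
  have hne : τ 0 ≠ τ 1 := fun h => hp (Or.inl (by
    rw [hτ0, hτ1] at h
    linear_combination σ.injective h - h))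
  obtain ⟨hin, hout⟩ := nonempty_uIoo_and_compl_uIcc_of_ne_add_one hne
    (fun h => hp (Or.inl (by rw [← hτ0, ← hτ1, h]; ring)))
    (fun h => hp (Or.inr (by rw [← hτ0, ← hτ1, h]; ring)))
  obtain ⟨m, hm, hmn, hsep⟩ := exists_consecutive_mem_uIoo_notMem_uIcc τ hin hout
  have hcross : δ (τ 0) (τ m) + δ (τ 1) (τ ↑(m + 1)) < δ (τ 0) (τ 1) + δ (τ m) (τ ↑(m + 1)) := by
    rcases hsep with ⟨hw, hz⟩ | ⟨hz, hw⟩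
    · exact (hK.add_lt_add_of_mem_uIoo hsym hw hz).1
    · rw [hsym (τ m)]
      exact (hK.add_lt_add_of_mem_uIoo hsym hz hw).2
  obtain ⟨τ', hτ'⟩ := exists_perm_tourLength_lt hsym τ hm hmn hcross
  exact ⟨τ', hτ'.trans_eq (tourLength_comp_addLeft δ σ p)⟩

/-- if `δ` is a dissimilarity map on `{1,…,n}` satisfying the
strict Kalmanson conditions for the identity circular ordering, and `σ` is a
permutation whose circular ordering is not the identity circular ordering up
to rotation and reflection, then the tour of `σ` is strictly longer than the
identity tour:  `Σ_i δ(σ(i),σ(i+1)) > Σ_i δ(i,i+1)` (indices cyclic). -/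
theorem identity_tour_unique_optimum {n : ℕ} [NeZero n]
    (δ : Fin n → Fin n → ℝ) (hdis : IsDissimilarity δ)
    (hK : StrictKalmanson δ) (σ : Equiv.Perm (Fin n))
    (hσ : ¬ DihedrallyIdentity σ) :
    ∑ i : Fin n, δ (σ i) (σ (i + 1)) > ∑ i : Fin n, δ i (i + 1) := by
  obtain ⟨μ, -, hμ⟩ := Finset.univ.exists_min_image (fun ρ : Equiv.Perm (Fin n) => tourLength δ ρ)
    Finset.univ_nonempty
  have hμ_dihedral : DihedrallyIdentity μ := by
    by_contra h
    obtain ⟨μ', hμ'⟩ := exists_tourLength_lt_of_not_dihedrallyIdentity hdis.1 hK h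
    exact (hμ μ' (Finset.mem_univ _)).not_gt hμ'
  obtain ⟨σ', hσ'⟩ := exists_tourLength_lt_of_not_dihedrallyIdentity hdis.1 hK hσ
  calc ∑ i : Fin n, δ i (i + 1) = tourLength δ μ :=
        (tourLength_eq_of_dihedrallyIdentity hdis.1 hμ_dihedral).symm
    _ ≤ tourLength δ σ' := hμ σ' (Finset.mem_univ _)
    _ < tourLength δ σ := hσ'
end
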